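/- Let p_n(x) be defined by p_0 = 1, p_1 = x, p_{n+1} = x·p_n + q^{1-2n}[n][n-1]·p_{n-1}, and p^{(n)} = p_n/[n]!. Then for every n ∈ ℕ and every ℓ ∈ ℤ, the evaluation p^{(n)}([2ℓ]) lies in ℤ[q, q^{-1}]. -/

import Mathlib

open Finset Polynomial

noncomputable def q : RatFunc ℚ := RatFunc.X

noncomputable def qa (n : ℤ) : RatFunc ℚ := (q ^ n - q ^ (-n)) / (q - q⁻¹)

noncomputable def qfac (n : ℕ) : RatFunc ℚ := ∏ k ∈ Finset.range n, qa ((k : ℤ) + 1)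

noncomputable def qbin (a : ℤ) (n : ℕ) : RatFunc ℚ :=
  ∏ k ∈ Finset.range n, qa (a - (k : ℤ)) / qa ((k : ℤ) + 1)

noncomputable def qa2 (n : ℤ) : RatFunc ℚ :=
  (q ^ (2 * n) - q ^ (-(2 * n))) / (q ^ (2 : ℤ) - q ^ (-2 : ℤ))

noncomputable def qbin2 (a : ℤ) (n : ℕ) : RatFunc ℚ :=
  ∏ k ∈ Finset.range n, qa2 (a - (k : ℤ)) / qa2 ((k : ℤ) + 1)

noncomputable def LaurentZ : Subring (RatFunc ℚ) := Subring.closure {q, q⁻¹}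

noncomputable def NatLaurent : Subsemiring (RatFunc ℚ) := Subsemiring.closure {q⁻¹}

/-!
At `q = 1`, `p_n(2ℓ) / n!` is the coefficient of `tⁿ` in `((1 + t) / (1 - t))^ℓ = (1 + t)^ℓ (1 - t)^(-ℓ)`,
a convolution of binomial coefficients. Its `q`-analogue is
`p_n([2ℓ]) = [n]! q^(-n(n-1)/2) ∑_{j+k=n} q^(ℓ(j-k)) [ℓ+j-1 choose j] [ℓ choose k]`:
the sum satisfies `[n+2] T_{n+2} = q^(n+1) [2ℓ] T_{n+1} + [n] T_n`, which follows by splitting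
`[j+k] = q^k [j] + q^(-j) [k]` and absorbing `[j]`, `[k]` into the Gaussian binomials.
Gaussian binomials `[a choose k]` with `a ∈ ℤ` lie in `ℤ[q, q⁻¹]` by the `q`-Pascal rule.
-/

lemma q_ne_zero : q ≠ 0 := RatFunc.X_ne_zero

lemma intDegree_q_zpow (m : ℤ) : (q ^ m).intDegree = m := by
  induction m using Int.induction_on with
  | zero => simp
  | succ i ih =>
    rw [zpow_add_one₀ q_ne_zero, RatFunc.intDegree_mul (zpow_ne_zero _ q_ne_zero) q_ne_zero, ih,
      q, RatFunc.intDegree_X]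
  | pred i ih =>
    rw [zpow_sub_one₀ q_ne_zero, RatFunc.intDegree_mul (zpow_ne_zero _ q_ne_zero)
      (inv_ne_zero q_ne_zero), RatFunc.intDegree_inv, ih, q, RatFunc.intDegree_X, sub_eq_add_neg]

lemma q_zpow_injective : Function.Injective (q ^ · : ℤ → RatFunc ℚ) := fun m n h => by
  simpa only [intDegree_q_zpow] using congrArg RatFunc.intDegree h

lemma q_sub_q_inv_ne_zero : q - q⁻¹ ≠ 0 := by
  simpa [sub_ne_zero] using q_zpow_injective.ne (show (1 : ℤ) ≠ -1 by norm_num)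

lemma qa_ne_zero {m : ℤ} (hm : m ≠ 0) : qa m ≠ 0 :=
  div_ne_zero (sub_ne_zero.2 (q_zpow_injective.ne (by omega))) q_sub_q_inv_ne_zero

lemma qa_zero : qa 0 = 0 := by simp [qa]

lemma qa_one : qa 1 = 1 := by
  rw [qa, zpow_one, zpow_neg_one, div_self q_sub_q_inv_ne_zero]

lemma qa_neg (m : ℤ) : qa (-m) = -qa m := by
  rw [qa, qa, neg_neg, ← neg_div, neg_sub]

lemma q_zpow_mul_qa (x y : ℤ) : q ^ x * qa y = (q ^ (x + y) - q ^ (x - y)) / (q - q⁻¹) := by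
  rw [qa, mul_div_assoc', mul_sub, ← zpow_add₀ q_ne_zero, ← zpow_add₀ q_ne_zero, ← sub_eq_add_neg]

lemma qa_add (j k : ℤ) : qa (j + k) = q ^ k * qa j + q ^ (-j) * qa k := by
  rw [qa]
  simp only [q_zpow_mul_qa]
  ring_nf

lemma qfac_succ (n : ℕ) : qfac (n + 1) = qfac n * qa ((n : ℤ) + 1) :=
  prod_range_succ _ n

lemma qfac_ne_zero (n : ℕ) : qfac n ≠ 0 :=
  prod_ne_zero_iff.2 fun k _ => qa_ne_zero (by omega)

lemma qbin_zero_right (a : ℤ) : qbin a 0 = 1 := prod_range_zero _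

lemma qbin_zero_succ (k : ℕ) : qbin 0 (k + 1) = 0 :=
  prod_eq_zero (mem_range.2 k.succ_pos) (by simp [qa_zero])

lemma qbin_eq_div_qfac (a : ℤ) (k : ℕ) : qbin a k = (∏ i ∈ range k, qa (a - i)) / qfac k :=
  prod_div_distrib _ _

lemma qa_mul_qbin_succ (a : ℤ) (k : ℕ) :
    qa ((k : ℤ) + 1) * qbin a (k + 1) = qa (a - k) * qbin a k := by
  rw [qbin, prod_range_succ, ← qbin]
  field_simp [qa_ne_zero (by omega : (k : ℤ) + 1 ≠ 0)]

lemma qa_mul_qbin_succ_succ (a : ℤ) (k : ℕ) :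
    qa ((k : ℤ) + 1) * qbin (a + 1) (k + 1) = qa (a + 1) * qbin a k := by
  rw [qbin_eq_div_qfac, qbin_eq_div_qfac, prod_range_succ', qfac_succ]
  field_simp [qa_ne_zero (by omega : (k : ℤ) + 1 ≠ 0), qfac_ne_zero k]
  push_cast
  ring_nf

lemma qbin_succ_succ (a : ℤ) (k : ℕ) :
    qbin (a + 1) (k + 1) = q ^ ((k : ℤ) + 1) * qbin a (k + 1) + q ^ ((k : ℤ) - a) * qbin a k := by
  have hk : qa ((k : ℤ) + 1) ≠ 0 := qa_ne_zero (by omega)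
  have h := qa_add (a - k) (k + 1)
  rw [show a - k + (k + 1) = a + 1 by ring, neg_sub] at h
  apply mul_left_cancel₀ hk
  linear_combination qa_mul_qbin_succ_succ a k - q ^ ((k : ℤ) + 1) * qa_mul_qbin_succ a k
    + qbin a k * h

lemma q_zpow_mem_laurentZ (m : ℤ) : q ^ m ∈ LaurentZ := by
  obtain ⟨n, rfl | rfl⟩ := Int.eq_nat_or_neg m
  · rw [zpow_natCast]
    exact pow_mem (Subring.subset_closure (by simp)) n
  · rw [zpow_neg, zpow_natCast, ← inv_pow]
    exact pow_mem (Subring.subset_closure (by simp)) n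

lemma qbin_mem_laurentZ (k : ℕ) : ∀ a : ℤ, qbin a k ∈ LaurentZ := by
  induction k with
  | zero => simp [qbin_zero_right, one_mem]
  | succ k ih =>
    intro a
    induction a using Int.induction_on with
    | zero => simp [qbin_zero_succ, zero_mem]
    | succ a iha =>
      rw [qbin_succ_succ]
      exact add_mem (mul_mem (q_zpow_mem_laurentZ _) iha) (mul_mem (q_zpow_mem_laurentZ _) (ih _))
    | pred a iha =>
      have h := qbin_succ_succ (-a - 1) k
      rw [sub_add_cancel] at h
      have hinv : qbin (-a - 1) (k + 1) = q ^ (-((k : ℤ) + 1))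
          * (qbin (-a) (k + 1) - q ^ ((k : ℤ) - (-a - 1)) * qbin (-a - 1) k) := by
        rw [h, zpow_neg]
        field_simp [zpow_ne_zero _ q_ne_zero]
        ring
      rw [hinv]
      exact mul_mem (q_zpow_mem_laurentZ _) (sub_mem iha (mul_mem (q_zpow_mem_laurentZ _) (ih _)))

/-- `[l + j - 1 choose j]_q`, written via the negation rule for `qbin`. -/
noncomputable def qmultichoose (l : ℤ) (j : ℕ) : RatFunc ℚ := (-1) ^ j * qbin (-l) j

lemma qa_mul_qmultichoose_succ (l : ℤ) (j : ℕ) :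
    qa ((j : ℤ) + 1) * qmultichoose l (j + 1) = qa (l + j) * qmultichoose l j := by
  have h := qa_mul_qbin_succ (-l) j
  rw [show -l - j = -(l + j) by ring, qa_neg] at h
  rw [qmultichoose, qmultichoose, pow_succ]
  linear_combination -(-1 : RatFunc ℚ) ^ j * h

lemma qmultichoose_mem_laurentZ (l : ℤ) (j : ℕ) : qmultichoose l j ∈ LaurentZ :=
  mul_mem (pow_mem (neg_mem (one_mem _)) j) (qbin_mem_laurentZ j (-l))

noncomputable def qconvTerm (l : ℤ) (j k : ℕ) : RatFunc ℚ :=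
  q ^ (l * ((j : ℤ) - k)) * qmultichoose l j * qbin l k

noncomputable def qconv (l : ℤ) (n : ℕ) : RatFunc ℚ :=
  ∑ x ∈ antidiagonal n, qconvTerm l x.1 x.2

lemma qa_mul_qconvTerm_succ_left (l : ℤ) (j k : ℕ) :
    qa ((j : ℤ) + 1) * qconvTerm l (j + 1) k = q ^ l * qa (l + j) * qconvTerm l j k := by
  have h : q ^ (l * (((j + 1 : ℕ) : ℤ) - k)) = q ^ l * q ^ (l * ((j : ℤ) - k)) := by
    rw [← zpow_add₀ q_ne_zero]; push_cast; ring_nf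
  rw [qconvTerm, qconvTerm, h]
  linear_combination q ^ l * q ^ (l * ((j : ℤ) - k)) * qbin l k * qa_mul_qmultichoose_succ l j

lemma qa_mul_qconvTerm_succ_right (l : ℤ) (j k : ℕ) :
    qa ((k : ℤ) + 1) * qconvTerm l j (k + 1) = q ^ (-l) * qa (l - k) * qconvTerm l j k := by
  have h : q ^ (l * ((j : ℤ) - ((k + 1 : ℕ) : ℤ))) = q ^ (-l) * q ^ (l * ((j : ℤ) - k)) := by
    rw [← zpow_add₀ q_ne_zero]; push_cast; ring_nf
  rw [qconvTerm, qconvTerm, h]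
  linear_combination q ^ (-l) * q ^ (l * ((j : ℤ) - k)) * qmultichoose l j * qa_mul_qbin_succ l k

lemma qconv_mem_laurentZ (l : ℤ) (n : ℕ) : qconv l n ∈ LaurentZ :=
  sum_mem fun x _ => mul_mem (mul_mem (q_zpow_mem_laurentZ _) (qmultichoose_mem_laurentZ l x.1))
    (qbin_mem_laurentZ x.2 l)

section antidiagonal

variable {M : Type*} [AddCommMonoid M] {f : ℕ × ℕ → M} (n : ℕ)

lemma sum_antidiagonal_succ_of_fst_eq_zero (hf : ∀ k, f (0, k) = 0) :
    ∑ x ∈ antidiagonal (n + 1), f x = ∑ x ∈ antidiagonal n, f (x.1 + 1, x.2) := by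
  rw [Nat.sum_antidiagonal_succ, hf, zero_add]

lemma sum_antidiagonal_succ_of_snd_eq_zero (hf : ∀ j, f (j, 0) = 0) :
    ∑ x ∈ antidiagonal (n + 1), f x = ∑ x ∈ antidiagonal n, f (x.1, x.2 + 1) := by
  rw [Nat.sum_antidiagonal_succ', hf, zero_add]

end antidiagonal

lemma qa_mul_qconv (l : ℤ) (n : ℕ) :
    qa n * qconv l n = ∑ x ∈ antidiagonal n,
      (q ^ (x.2 : ℤ) * qa x.1 * qconvTerm l x.1 x.2
        + q ^ (-(x.1 : ℤ)) * qa x.2 * qconvTerm l x.1 x.2) := by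
  rw [qconv, mul_sum]
  refine sum_congr rfl fun x hx => ?_
  rw [← mem_antidiagonal.1 hx, Nat.cast_add, qa_add]
  ring

lemma sum_antidiagonal_qa_mul_qconvTerm_succ (l : ℤ) (n : ℕ) :
    ∑ x ∈ antidiagonal (n + 1),
      (q ^ (x.2 : ℤ) * qa x.1 * qconvTerm l x.1 x.2
        + q ^ (-(x.1 : ℤ)) * qa x.2 * qconvTerm l x.1 x.2)
    = q ^ (n : ℤ) * qa (2 * l) * qconv l n + ∑ x ∈ antidiagonal n,
      (q ^ ((x.2 : ℤ) - 2 * l) * qa x.1 * qconvTerm l x.1 x.2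
        - q ^ (-(x.1 : ℤ)) * qa x.2 * qconvTerm l x.1 x.2) := by
  rw [sum_add_distrib, sum_antidiagonal_succ_of_fst_eq_zero n (by simp [qa_zero]),
    sum_antidiagonal_succ_of_snd_eq_zero n (by simp [qa_zero]), ← sum_add_distrib, qconv, mul_sum,
    ← sum_add_distrib]
  refine sum_congr rfl fun x hx => ?_
  obtain ⟨j, k⟩ := x
  have hcoeff : q ^ (k : ℤ) * q ^ l * qa (l + j) + q ^ (-(j : ℤ)) * q ^ (-l) * qa (l - k)
      = q ^ ((j : ℤ) + k) * qa (2 * l) + q ^ ((k : ℤ) - 2 * l) * qa j - q ^ (-(j : ℤ)) * qa k := by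
    simp only [← zpow_add₀ q_ne_zero, q_zpow_mul_qa]
    ring_nf
  rw [← mem_antidiagonal.1 hx]
  push_cast
  linear_combination q ^ (k : ℤ) * qa_mul_qconvTerm_succ_left l j k
    + q ^ (-(j : ℤ)) * qa_mul_qconvTerm_succ_right l j k + qconvTerm l j k * hcoeff

lemma sum_antidiagonal_succ_qa_mul_qconvTerm_sub (l : ℤ) (n : ℕ) :
    ∑ x ∈ antidiagonal (n + 1),
      (q ^ ((x.2 : ℤ) - 2 * l) * qa x.1 * qconvTerm l x.1 x.2
        - q ^ (-(x.1 : ℤ)) * qa x.2 * qconvTerm l x.1 x.2)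
    = qa n * qconv l n := by
  rw [sum_sub_distrib, sum_antidiagonal_succ_of_fst_eq_zero n (by simp [qa_zero]),
    sum_antidiagonal_succ_of_snd_eq_zero n (by simp [qa_zero]), ← sum_sub_distrib, qconv, mul_sum]
  refine sum_congr rfl fun x hx => ?_
  obtain ⟨j, k⟩ := x
  have hcoeff : qa ((j : ℤ) + k)
      = q ^ ((k : ℤ) - 2 * l) * q ^ l * qa (l + j) - q ^ (-(j : ℤ)) * q ^ (-l) * qa (l - k) := by
    rw [qa]
    simp only [← zpow_add₀ q_ne_zero, q_zpow_mul_qa]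
    ring_nf
  rw [← mem_antidiagonal.1 hx]
  push_cast
  linear_combination q ^ ((k : ℤ) - 2 * l) * qa_mul_qconvTerm_succ_left l j k
    - q ^ (-(j : ℤ)) * qa_mul_qconvTerm_succ_right l j k - qconvTerm l j k * hcoeff

lemma qa_mul_qconv_add_two (l : ℤ) (n : ℕ) :
    qa ((n : ℤ) + 2) * qconv l (n + 2)
      = q ^ ((n : ℤ) + 1) * qa (2 * l) * qconv l (n + 1) + qa n * qconv l n := by
  have h := qa_mul_qconv l (n + 1 + 1)
  rw [sum_antidiagonal_qa_mul_qconvTerm_succ, sum_antidiagonal_succ_qa_mul_qconvTerm_sub] at h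
  rwa [Nat.cast_add_one, add_assoc, one_add_one_eq_two] at h

lemma qconv_zero (l : ℤ) : qconv l 0 = 1 := by
  simp [qconv, qconvTerm, qmultichoose, qbin_zero_right]

lemma qconv_one (l : ℤ) : qconv l 1 = qa (2 * l) := by
  have hbin : qbin l 1 = qa l := by simp [qbin, qa_one]
  have hmulti : qmultichoose l 1 = qa l := by simp [qmultichoose, qbin, qa_one, qa_neg]
  have hmulti0 : qmultichoose l 0 = 1 := by simp [qmultichoose, qbin_zero_right]
  rw [qconv, Nat.sum_antidiagonal_succ, Nat.antidiagonal_zero, sum_singleton, two_mul, qa_add]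
  simp only [qconvTerm, hbin, hmulti, hmulti0, qbin_zero_right, Nat.cast_zero, Nat.cast_one,
    zero_add, zero_sub, sub_zero, mul_neg, mul_one, zpow_neg]
  ring

lemma eval_qa_two_mul_eq (p : ℕ → Polynomial (RatFunc ℚ))
    (hp0 : p 0 = 1) (hp1 : p 1 = Polynomial.X)
    (hrec : ∀ n : ℕ, 1 ≤ n →
      p (n + 1) = Polynomial.X * p n
        + Polynomial.C (q ^ (1 - 2 * (n : ℤ)) * qa n * qa ((n : ℤ) - 1)) * p (n - 1))
    (l : ℤ) (n : ℕ) :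
    (p n).eval (qa (2 * l)) = qfac n * q ^ (-(n.choose 2 : ℤ)) * qconv l n := by
  induction n using Nat.twoStepInduction with
  | zero => simp [hp0, qfac, qconv_zero]
  | one => simp [hp1, qfac, qa_one, qconv_one]
  | more n ih0 ih1 =>
    have hpow1 : q ^ (-((n + 1).choose 2 : ℤ))
        = q ^ ((n : ℤ) + 1) * q ^ (-((n + 2).choose 2 : ℤ)) := by
      rw [← zpow_add₀ q_ne_zero, Nat.choose_succ_succ' (n + 1), Nat.choose_one_right]
      push_cast
      ring_nf
    have hpow2 : q ^ (1 - 2 * ((n : ℤ) + 1)) * q ^ (-(n.choose 2 : ℤ))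
        = q ^ (-((n + 2).choose 2 : ℤ)) := by
      rw [← zpow_add₀ q_ne_zero, Nat.choose_succ_succ' (n + 1), Nat.choose_one_right,
        Nat.choose_succ_succ' n, Nat.choose_one_right]
      push_cast
      ring_nf
    rw [hrec (n + 1) le_add_self, Nat.add_sub_cancel, eval_add, eval_mul, eval_mul, eval_X, eval_C,
      ih0, ih1, qfac_succ, qfac_succ, qfac_succ]
    push_cast
    rw [add_sub_cancel_right, add_assoc _ 1 1, one_add_one_eq_two]
    linear_combination qa (2 * l) * qfac n * qa ((n : ℤ) + 1) * qconv l (n + 1) * hpow1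
      + qa ((n : ℤ) + 1) * qa n * qfac n * qconv l n * hpow2
      - qfac n * qa ((n : ℤ) + 1) * q ^ (-((n + 2).choose 2 : ℤ)) * qa_mul_qconv_add_two l n

/-- p^{(n)}([2ℓ]) ∈ ℤ[q,q⁻¹] for all n ∈ ℕ, ℓ ∈ ℤ. -/
theorem stmt5 (p : ℕ → Polynomial (RatFunc ℚ))
    (hp0 : p 0 = 1) (hp1 : p 1 = Polynomial.X)
    (hrec : ∀ n : ℕ, 1 ≤ n →
      p (n + 1) = Polynomial.X * p n
        + Polynomial.C (q ^ (1 - 2 * (n : ℤ)) * qa n * qa ((n : ℤ) - 1)) * p (n - 1)) :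
    ∀ (n : ℕ) (ℓ : ℤ), Polynomial.eval (qa (2 * ℓ)) (p n) / qfac n ∈ LaurentZ := by
  intro n ℓ
  rw [eval_qa_two_mul_eq p hp0 hp1 hrec ℓ n, mul_assoc, mul_div_cancel_left₀ _ (qfac_ne_zero n)]
  exact mul_mem (q_zpow_mem_laurentZ _) (qconv_mem_laurentZ ℓ n)
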